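/- arXiv:1101.4922 — 4 statements merged into one kernel-verified Lean document; each statement's English description precedes it below -/
import Mathlib

section
/- For every n×n matrix W over 𝔽₂ with all diagonal entries equal to 1, and every vector c ∈ 𝔽₂ⁿ, there exists x ∈ 𝔽₂ⁿ such that the Hamming weight of W·x + c is at least ⌈n/2⌉. -/
/-!
Average over all `x ∈ 𝔽₂ⁿ`. Since `Wᵢᵢ = 1`, replacing `x` by `x + eᵢ` flips the `i`-th coordinate of
`W x + c`, so that coordinate is nonzero for exactly half of the `x`. Hence the weights `|W x + c|` sum
to `n 2ⁿ / 2`, and some `x` has weight at least the average `n / 2`.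
-/

open Finset Matrix

theorem two_mul_card_filter_ne_zero {V : Type*} [AddGroup V] [Fintype V]
    (f : V → ZMod 2) (d : V) (hf : ∀ v, f (v + d) = f v + 1) :
    2 * #{v | f v ≠ 0} = Fintype.card V := by
  have hf' : ∀ v, f (v + -d) = f v + 1 := fun v =>
    CharTwo.eq_add_iff_add_eq.mpr (by simpa using (hf (v + -d)).symm)
  have hsucc : ∀ a : ZMod 2, a + 1 = 0 ↔ a ≠ 0 := by decide
  have hflip : #{v | f v = 0} = #{v | f v ≠ 0} := by
    refine card_nbij' (· + d) (· + -d) ?_ ?_ ?_ ?_ <;> intro v hv <;> simp_all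
  have hsplit := card_filter_add_card_filter_not (s := univ) (fun v => f v = 0)
  rw [card_univ, hflip] at hsplit
  rwa [two_mul]

theorem two_mul_sum_hammingNorm {V ι : Type*} [AddGroup V] [Fintype V] [Fintype ι]
    (f : V → ι → ZMod 2) (hf : ∀ i, ∃ d, ∀ v, f (v + d) i = f v i + 1) :
    ∑ v, 2 * hammingNorm (f v) = Fintype.card ι * Fintype.card V := by
  calc ∑ v, 2 * hammingNorm (f v) = ∑ i, 2 * #{v | f v i ≠ 0} := by
        simp only [hammingNorm, card_filter, mul_sum]
        exact sum_comm
    _ = ∑ _i : ι, Fintype.card V := sum_congr rfl fun i _ =>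
        let ⟨d, hd⟩ := hf i; two_mul_card_filter_ne_zero (f · i) d hd
    _ = Fintype.card ι * Fintype.card V := by rw [sum_const, card_univ, smul_eq_mul]

/-- There exists `x` with `|W·x + c| ≥ ⌈n/2⌉`. -/
theorem exists_hammingNorm_ge_half (n : ℕ) (W : Matrix (Fin n) (Fin n) (ZMod 2))
    (hW : ∀ i, W i i = 1) (c : Fin n → ZMod 2) :
    ∃ x : Fin n → ZMod 2, (n + 1) / 2 ≤ hammingNorm (W.mulVec x + c) := by
  have hflip : ∀ i x, (W *ᵥ (x + Pi.single i 1) + c) i = (W *ᵥ x + c) i + 1 := fun i x => by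
    simp only [mulVec_add, mulVec_single_one, Pi.add_apply, col_apply, hW, add_right_comm]
  have hsum := two_mul_sum_hammingNorm (fun x => W *ᵥ x + c) fun i => ⟨Pi.single i 1, hflip i⟩
  have hle : ∑ _x : Fin n → ZMod 2, n ≤ ∑ x, 2 * hammingNorm (W *ᵥ x + c) := by
    rw [hsum, sum_const, card_univ, smul_eq_mul, Fintype.card_fin, mul_comm]
  obtain ⟨x, -, hx⟩ := exists_le_of_sum_le univ_nonempty hle
  exact ⟨x, by omega⟩
end

section
/- Define ν(n) = min over all W ∈ A(n) and c ∈ 𝔽₂ⁿ of M(W,c), where A(n) is the set of n×n matrices over 𝔽₂ with all diagonal entries 1 and M(W,c) = max over x ∈ 𝔽₂ⁿ of |W·x + c|. Then ν(n) = ⌈n/2⌉ for all n ≥ 1. -/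
/-!
Lower bound: for `W` with unit diagonal, each coordinate of `x ↦ W x + c` takes the value `1`
on exactly half of `𝔽₂ⁿ`, since adding `eᵢ` to `x` flips coordinate `i`. Hence the average of
`|W x + c|` is `n / 2`, so its maximum is at least `n / 2`.

Upper bound: take `W` block diagonal with `2 × 2` all-ones blocks on `{2k, 2k + 1}` and
`cᵢ = i mod 2`. Within a block both coordinates of `W x` agree while those of `c` differ, so each
of the `⌈n/2⌉` blocks contributes at most one nonzero coordinate of `W x + c`.
-/

/-- `M(W, c) := max_x |W·x + c|`. -/
def maxLit {n : ℕ} (W : Matrix (Fin n) (Fin n) (ZMod 2)) (c : Fin n → ZMod 2) : ℕ :=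
  Finset.univ.sup fun x : Fin n → ZMod 2 => hammingNorm (W.mulVec x + c)

open Finset Matrix

lemma two_mul_card_filter_ne_zero_of_add_eq_add_one {G : Type*} [AddGroup G] [Fintype G]
    (f : G → ZMod 2) (a : G) (hf : ∀ x, f (x + a) = f x + 1) :
    2 * #{x | f x ≠ 0} = Fintype.card G := by
  have hflip : ∀ x, f (x + a) ≠ 0 ↔ f x = 0 := fun x => by
    rw [hf]
    exact (by decide : ∀ b : ZMod 2, b + 1 ≠ 0 ↔ b = 0) _
  have hswap : #{x | f x = 0} = #{x | f x ≠ 0} :=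
    card_equiv (Equiv.addRight a) fun x => by simp [hflip x]
  rw [two_mul]
  nth_rw 1 [← hswap]
  exact card_filter_add_card_filter_not _

lemma sum_hammingNorm {α ι β : Type*} [Fintype α] [Fintype ι] [Zero β] [DecidableEq β]
    (v : α → ι → β) : ∑ x, hammingNorm (v x) = ∑ i, #{x | v x i ≠ 0} := by
  simp only [hammingNorm, card_filter]
  exact sum_comm

lemma mulVec_add_single_one_apply {ι R : Type*} [Fintype ι] [DecidableEq ι] [NonAssocSemiring R]
    (W : Matrix ι ι R) (x : ι → R) (i : ι) :
    (W *ᵥ (x + Pi.single i 1)) i = (W *ᵥ x) i + W i i := by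
  rw [mulVec_add, mulVec_single_one]
  rfl

lemma two_mul_sum_hammingNorm_mulVec_add {ι : Type*} [Fintype ι] [DecidableEq ι]
    (W : Matrix ι ι (ZMod 2)) (c : ι → ZMod 2) (hW : ∀ i, W i i = 1) :
    2 * ∑ x, hammingNorm (W *ᵥ x + c) = Fintype.card ι * 2 ^ Fintype.card ι := by
  have hcoord : ∀ i, 2 * #{x | (W *ᵥ x + c) i ≠ 0} = 2 ^ Fintype.card ι := fun i => by
    rw [two_mul_card_filter_ne_zero_of_add_eq_add_one _ (Pi.single i 1) fun x => ?_]
    · simp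
    · simp only [Pi.add_apply, mulVec_add_single_one_apply, hW]
      ring
  rw [sum_hammingNorm, mul_sum, sum_congr rfl fun i _ => hcoord i, sum_const, card_univ,
    smul_eq_mul]

lemma le_two_mul_maxLit {n : ℕ} (W : Matrix (Fin n) (Fin n) (ZMod 2)) (c : Fin n → ZMod 2)
    (hW : ∀ i, W i i = 1) : n ≤ 2 * maxLit W c := by
  have hsum : ∑ x, hammingNorm (W *ᵥ x + c) ≤ 2 ^ n * maxLit W c := by
    simpa using sum_le_card_nsmul univ (fun x => hammingNorm (W *ᵥ x + c)) (maxLit W c)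
      fun x _ => le_sup (f := fun x => hammingNorm (W *ᵥ x + c)) (mem_univ x)
  have h := two_mul_sum_hammingNorm_mulVec_add W c hW
  rw [Fintype.card_fin] at h
  have : n * 2 ^ n ≤ 2 * maxLit W c * 2 ^ n := by nlinarith
  exact Nat.le_of_mul_le_mul_right this (by positivity)

def pairBlockMatrix (n : ℕ) : Matrix (Fin n) (Fin n) (ZMod 2) :=
  fun i j => if (i : ℕ) / 2 = (j : ℕ) / 2 then 1 else 0

def parityVec (n : ℕ) : Fin n → ZMod 2 :=
  fun i => ((i : ℕ) : ZMod 2)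

lemma pairBlockMatrix_apply_self {n : ℕ} (i : Fin n) : pairBlockMatrix n i i = 1 :=
  if_pos rfl

lemma hammingNorm_pairBlockMatrix_mulVec_add_le {n : ℕ} (x : Fin n → ZMod 2) :
    hammingNorm (pairBlockMatrix n *ᵥ x + parityVec n) ≤ (n + 1) / 2 := by
  set v := pairBlockMatrix n *ᵥ x + parityVec n
  calc hammingNorm v ≤ #(univ : Finset (Fin ((n + 1) / 2))) := by
        refine card_le_card_of_injOn (fun i => ⟨(i : ℕ) / 2, by omega⟩)
          (fun _ _ => mem_univ _) fun i hi j hj hij => ?_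
        simp only [coe_filter, mem_univ, true_and, Set.mem_ofPred_eq] at hi hj
        simp only [Fin.mk.injEq] at hij
        by_contra hne
        have hrow : (pairBlockMatrix n *ᵥ x) i = (pairBlockMatrix n *ᵥ x) j := by
          simp only [mulVec, dotProduct, pairBlockMatrix, hij]
        have hpar : parityVec n i + parityVec n j = 1 := by
          have : ((i : ℕ) + j) % 2 = 1 := by
            have : (i : ℕ) ≠ j := Fin.val_ne_of_ne hne
            omega
          rw [parityVec, parityVec, ← Nat.cast_add, ← ZMod.natCast_mod, this, Nat.cast_one]
        have hsum : v i + v j = 1 := by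
          simp only [v, Pi.add_apply, hrow]
          linear_combination hpar + CharTwo.add_self_eq_zero ((pairBlockMatrix n *ᵥ x) j)
        exact (by decide : ∀ a b : ZMod 2, a ≠ 0 → b ≠ 0 → a + b ≠ 1) _ _ hi hj hsum
    _ = (n + 1) / 2 := by simp

lemma maxLit_pairBlockMatrix_parityVec_le (n : ℕ) :
    maxLit (pairBlockMatrix n) (parityVec n) ≤ (n + 1) / 2 :=
  Finset.sup_le fun x _ => hammingNorm_pairBlockMatrix_mulVec_add_le x

theorem nu_eq_general (n : ℕ) :
    sInf {k : ℕ | ∃ (W : Matrix (Fin n) (Fin n) (ZMod 2)) (c : Fin n → ZMod 2),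
      (∀ i, W i i = 1) ∧ k = maxLit W c} = (n + 1) / 2 := by
  have hmem : maxLit (pairBlockMatrix n) (parityVec n) ∈
      {k : ℕ | ∃ (W : Matrix (Fin n) (Fin n) (ZMod 2)) (c : Fin n → ZMod 2),
        (∀ i, W i i = 1) ∧ k = maxLit W c} :=
    ⟨_, _, pairBlockMatrix_apply_self, rfl⟩
  refine le_antisymm ((Nat.sInf_le hmem).trans (maxLit_pairBlockMatrix_parityVec_le n)) ?_
  refine le_csInf ⟨_, hmem⟩ ?_
  rintro k ⟨W, c, hW, rfl⟩
  have := le_two_mul_maxLit W c hW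
  omega

/-- `ν(n) = ⌈n/2⌉`: the minimum of `M(W,c)` over all `W` with unit diagonal
and all initial configurations `c` is `⌈n/2⌉`. -/
theorem nu_eq (n : ℕ) (hn : 1 ≤ n) :
    sInf {k : ℕ | ∃ (W : Matrix (Fin n) (Fin n) (ZMod 2)) (c : Fin n → ZMod 2),
      (∀ i, W i i = 1) ∧ k = maxLit W c} = (n + 1) / 2 :=
  nu_eq_general n
end

section
/- Let n = 2r−1 be odd, let e ∈ 𝔽₂ⁿ have eᵢ = 1 exactly when i is even, and let W = diag(J₂,...,J₂,1) be the block-diagonal matrix with r−1 copies of the 2×2 all-ones matrix J₂ followed by a 1×1 block (1). Then for every x ∈ 𝔽₂ⁿ, |W·x + e| ∈ {r−1, r}, and hence max over x of |W·x + e| = r = ⌈n/2⌉. -/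
/-! With 0-based indices, rows `2k` and `2k+1` of `W` coincide while `e` is `0` at `2k` and `1`
at `2k+1`, so in each of the `r-1` pairs exactly one coordinate of `W x + e` is nonzero. The last
coordinate is `x (2r-2)` itself, so `|W x + e| = (r - 1) + [x (2r-2) ≠ 0]`, and the value `r` is
attained at `x = 1`. -/

open Finset Matrix

lemma hammingNorm_eq_sum_val {ι : Type*} [Fintype ι] (v : ι → ZMod 2) :
    hammingNorm v = ∑ i, (v i).val := by
  rw [hammingNorm, card_filter]
  refine sum_congr rfl fun i _ => ?_
  generalize v i = a
  revert a
  decide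

lemma ZMod.val_add_val_add_one_two (a : ZMod 2) : a.val + (a + 1).val = 1 := by
  revert a
  decide

lemma sum_range_two_mul_eq_sum_pairs {M : Type*} [AddCommMonoid M] (m : ℕ) (g : ℕ → M) :
    ∑ i ∈ range (2 * m), g i = ∑ k ∈ range m, (g (2 * k) + g (2 * k + 1)) := by
  induction m with
  | zero => simp
  | succ m ih =>
    rw [Nat.mul_succ, sum_range_succ, sum_range_succ, sum_range_succ, ih, add_assoc]

lemma sum_val_range_of_pairs_complementary (g : ℕ → ZMod 2) (m : ℕ)
    (hg : ∀ k < m, g (2 * k + 1) = g (2 * k) + 1) :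
    ∑ i ∈ range (2 * m + 1), (g i).val = m + (g (2 * m)).val := by
  have hpair : ∀ k ∈ range m, (g (2 * k)).val + (g (2 * k + 1)).val = 1 := fun k hk => by
    rw [hg k (mem_range.1 hk), ZMod.val_add_val_add_one_two]
  rw [sum_range_succ, sum_range_two_mul_eq_sum_pairs, sum_congr rfl hpair, sum_const,
    card_range, smul_eq_mul, mul_one]

lemma hammingNorm_blockJ2_mulVec_add (m : ℕ) (W : Matrix (Fin (2 * m + 1)) (Fin (2 * m + 1)) (ZMod 2))
    (hW : ∀ i j, W i j = if (i : ℕ) / 2 = (j : ℕ) / 2 then 1 else 0)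
    (e : Fin (2 * m + 1) → ZMod 2) (he : ∀ i, e i = if Odd (i : ℕ) then 1 else 0)
    (x : Fin (2 * m + 1) → ZMod 2) :
    hammingNorm (W *ᵥ x + e) = m + (x (Fin.last _)).val := by
  set y : ℕ → ZMod 2 := fun i =>
    (∑ j : Fin (2 * m + 1), (if i / 2 = (j : ℕ) / 2 then 1 else 0) * x j) + if Odd i then 1 else 0
  have hy : ∀ i : Fin (2 * m + 1), (W *ᵥ x + e) i = y i := fun i => by
    simp only [Pi.add_apply, Matrix.mulVec, dotProduct, hW, he, y]
  have hpairs : ∀ k, y (2 * k + 1) = y (2 * k) + 1 := fun k => by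
    simp only [y, show (2 * k + 1) / 2 = 2 * k / 2 by omega, odd_two_mul_add_one,
      Nat.not_odd_iff_even.2 (even_two_mul k), if_true, if_false, add_zero]
  have hlast : y (2 * m) = x (Fin.last _) := by
    have hblock : ∀ j : Fin (2 * m + 1), 2 * m / 2 = (j : ℕ) / 2 ↔ Fin.last _ = j := fun j => by
      rw [Fin.ext_iff, Fin.val_last]
      omega
    simp only [y, hblock, ite_mul, one_mul, zero_mul, sum_ite_eq, mem_univ, if_true,
      Nat.not_odd_iff_even.2 (even_two_mul m), if_false, add_zero]
  calc hammingNorm (W *ᵥ x + e) = ∑ i : Fin (2 * m + 1), (y i).val := by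
        simp only [hammingNorm_eq_sum_val, hy]
    _ = ∑ i ∈ range (2 * m + 1), (y i).val := Fin.sum_univ_eq_sum_range (fun i => (y i).val) _
    _ = m + (x (Fin.last _)).val := by
        rw [sum_val_range_of_pairs_complementary y m fun k _ => hpairs k, hlast]

/-- For `n = 2r−1` odd, the block-diagonal matrix with `r−1` copies of `J₂`
and a final `1×1` block, with the alternating configuration, always has `r−1` or
`r` bulbs lit, and the maximum is `r = ⌈n/2⌉`. -/
theorem blockJ2_odd (r : ℕ) (hr : 1 ≤ r) (n : ℕ) (hn : n = 2 * r - 1)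
    (W : Matrix (Fin n) (Fin n) (ZMod 2))
    (hW : ∀ i j, W i j = if (i : ℕ) / 2 = (j : ℕ) / 2 then 1 else 0)
    (e : Fin n → ZMod 2) (he : ∀ i, e i = if Odd (i : ℕ) then 1 else 0) :
    (∀ x : Fin n → ZMod 2,
        hammingNorm (W.mulVec x + e) = r - 1 ∨ hammingNorm (W.mulVec x + e) = r) ∧
    (Finset.univ.sup fun x : Fin n → ZMod 2 => hammingNorm (W.mulVec x + e)) = r ∧
    r = (n + 1) / 2 := by
  obtain ⟨m, rfl⟩ : ∃ m, r = m + 1 := ⟨r - 1, by omega⟩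
  obtain rfl : n = 2 * m + 1 := by omega
  have weight := hammingNorm_blockJ2_mulVec_add m W hW e he
  have hval (x : Fin (2 * m + 1) → ZMod 2) : (x (Fin.last _)).val < 2 := ZMod.val_lt _
  refine ⟨fun x => ?_, le_antisymm (Finset.sup_le fun x _ => ?_) ?_, by omega⟩
  · rw [weight]
    have := hval x
    omega
  · rw [weight]
    have := hval x
    omega
  · calc m + 1 = hammingNorm (W *ᵥ 1 + e) := by rw [weight, Pi.one_apply, ZMod.val_one]
      _ ≤ _ := Finset.le_sup (f := fun x => hammingNorm (W *ᵥ x + e)) (mem_univ 1)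
end

section
/- (Pivoting does not increase M.) Let W be an n×n matrix over 𝔽₂ with all diagonal entries 1, let c ∈ 𝔽₂ⁿ, and fix an index i. Define the pivoted matrix Wⁱ by: the j-th column of Wⁱ equals the i-th column of W whenever W j i = 1 (i.e. j ∈ F(i)), and equals the j-th column of W otherwise. Then max over x ∈ 𝔽₂ⁿ of |Wⁱ·x + c| ≤ max over x ∈ 𝔽₂ⁿ of |W·x + c|. -/
/-!
Every column of the pivoted matrix `Wⁱ` is a column of `W` (column `j` is replaced by column `i`
when `j ∈ F(i)`), so every vector `Wⁱ x` equals `W y` for the `y` obtained by summing the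
coordinates of `x` along that column selection. Hence `Wⁱ x + c` ranges over a subset of the
values of `W x + c`, and so does its Hamming weight.
-/

open Finset Matrix

theorem Matrix.submatrix_id_mulVec {m n o R : Type*} [Fintype n] [Fintype o] [DecidableEq n]
    [NonUnitalNonAssocSemiring R] (W : Matrix m n R) (σ : o → n) (x : o → R) :
    W.submatrix id σ *ᵥ x = W *ᵥ fun k => ∑ j ∈ univ.filter (σ · = k), x j := by
  ext r
  simp only [mulVec, dotProduct, submatrix_apply, id_eq, mul_sum]
  rw [← sum_fiberwise univ σ fun j => W r (σ j) * x j]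
  refine sum_congr rfl fun k _ => sum_congr rfl fun j hj => ?_
  rw [(mem_filter.mp hj).2]

theorem pivot_le_general (n : ℕ) (W : Matrix (Fin n) (Fin n) (ZMod 2))
    (c : Fin n → ZMod 2) (i : Fin n) :
    (Finset.univ.sup fun x : Fin n → ZMod 2 =>
        hammingNorm ((Matrix.of fun r j => if W j i = 1 then W r i else W r j :
          Matrix (Fin n) (Fin n) (ZMod 2)).mulVec x + c))
      ≤ Finset.univ.sup fun x : Fin n → ZMod 2 => hammingNorm (W.mulVec x + c) := by
  have hpivot : (Matrix.of fun r j => if W j i = 1 then W r i else W r j :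
      Matrix (Fin n) (Fin n) (ZMod 2)) = W.submatrix id fun j => if W j i = 1 then i else j := by
    ext r j
    simp only [of_apply, submatrix_apply, id_eq]
    split_ifs <;> rfl
  refine Finset.sup_le fun x _ => ?_
  rw [hpivot, submatrix_id_mulVec]
  exact le_sup (f := fun x => hammingNorm (W *ᵥ x + c)) (mem_univ _)

/-- Pivoting about a vertex does not increase `M(W,c)`. -/
theorem pivot_le (n : ℕ) (W : Matrix (Fin n) (Fin n) (ZMod 2))
    (hW : ∀ i, W i i = 1) (c : Fin n → ZMod 2) (i : Fin n) :
    (Finset.univ.sup fun x : Fin n → ZMod 2 =>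
        hammingNorm ((Matrix.of fun r j => if W j i = 1 then W r i else W r j :
          Matrix (Fin n) (Fin n) (ZMod 2)).mulVec x + c))
      ≤ Finset.univ.sup fun x : Fin n → ZMod 2 => hammingNorm (W.mulVec x + c) :=
  pivot_le_general n W c i
end
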